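/- Let C be an abelian category with enough projectives and enough injectives, such that every projective object of C is injective, C has sequential (ℕ-indexed) colimits, and a sequential colimit of exact sequences in C is exact. Let F, G : ℕ ⥤ C be functors all of whose transition maps F(n) → F(n+1) and G(n) → G(n+1) are monomorphisms, and let φ : F → G be a natural transformation such that φ(n) : F(n) → G(n) is a stable equivalence for every n ∈ ℕ. Then the induced map colim F → colim G is a stable equivalence. -/

import Mathlib

/-!
Projective covers of the `G n` assemble into a sequence `P` of projectives with split monic
transition maps and a levelwise epimorphism `ρ : P ⟶ G`, so that `φ` factors as
`F ⟶ F ⊞ P ⟶ G` with second map `ψ = (φ, ρ)` a levelwise epimorphic stable equivalence.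
Lifts along an epimorphism can be made compatible along split monos, so `colim P` is projective
and `colim F ⟶ colim (F ⊞ P)` is a stable equivalence. The kernel `K` of `ψ` is levelwise
projective, hence injective, so its transition maps split too and `colim K` is projective.
By exactness of sequential colimits, `colim K` is the kernel of the epimorphism `colim ψ`, which
therefore splits off a projective-injective kernel and is a stable equivalence.
-/

open CategoryTheory Limits

universe v u

/-- A morphism factors through a projective object. -/
def FactorsThroughProjective {C : Type u} [Category.{v} C]
    {X Y : C} (f : X ⟶ Y) : Prop :=
  ∃ (P : C) (_ : Projective P) (g : X ⟶ P) (h : P ⟶ Y), g ≫ h = f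

/-- A morphism `f : X ⟶ Y` is a stable equivalence if there is `h : Y ⟶ X`
such that `h ∘ f` is stably equivalent to `id_X` and `f ∘ h` is stably
equivalent to `id_Y`. -/
def IsStableEquiv {C : Type u} [Category.{v} C] [Preadditive C]
    {X Y : C} (f : X ⟶ Y) : Prop :=
  ∃ h : Y ⟶ X, FactorsThroughProjective (f ≫ h - 𝟙 X) ∧
    FactorsThroughProjective (h ≫ f - 𝟙 Y)

variable {C : Type u} [Category.{v} C]

namespace FactorsThroughProjective

theorem precomp {X Y Z : C} (f : X ⟶ Y) {g : Y ⟶ Z} (hg : FactorsThroughProjective g) :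
    FactorsThroughProjective (f ≫ g) := by
  obtain ⟨P, hP, a, b, rfl⟩ := hg
  exact ⟨P, hP, f ≫ a, b, by simp⟩

theorem postcomp {X Y Z : C} {f : X ⟶ Y} (hf : FactorsThroughProjective f) (g : Y ⟶ Z) :
    FactorsThroughProjective (f ≫ g) := by
  obtain ⟨P, hP, a, b, rfl⟩ := hf
  exact ⟨P, hP, a, b ≫ g, by simp⟩

theorem of_projective {P Y : C} [Projective P] (f : P ⟶ Y) : FactorsThroughProjective f :=
  ⟨P, inferInstance, 𝟙 P, f, Category.id_comp f⟩

open ZeroObject in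
theorem zero [HasZeroMorphisms C] [HasZeroObject C] (X Y : C) :
    FactorsThroughProjective (0 : X ⟶ Y) :=
  ⟨0, inferInstance, 0, 0, by simp⟩

theorem neg [Preadditive C] {X Y : C} {f : X ⟶ Y} (hf : FactorsThroughProjective f) :
    FactorsThroughProjective (-f) := by
  obtain ⟨P, hP, a, b, rfl⟩ := hf
  exact ⟨P, hP, a, -b, by simp⟩

theorem add [Preadditive C] [HasBinaryBiproducts C] {X Y : C} {f g : X ⟶ Y}
    (hf : FactorsThroughProjective f) (hg : FactorsThroughProjective g) :
    FactorsThroughProjective (f + g) := by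
  obtain ⟨P, _, a, b, rfl⟩ := hf
  obtain ⟨Q, _, c, d, rfl⟩ := hg
  exact ⟨P ⊞ Q, inferInstance, biprod.lift a c, biprod.desc b d, by simp⟩

theorem sub [Preadditive C] [HasBinaryBiproducts C] {X Y : C} {f g : X ⟶ Y}
    (hf : FactorsThroughProjective f) (hg : FactorsThroughProjective g) :
    FactorsThroughProjective (f - g) := by
  simpa only [sub_eq_add_neg] using hf.add hg.neg

end FactorsThroughProjective

theorem projective_of_factorsThroughProjective_id {K : C}
    (h : FactorsThroughProjective (𝟙 K)) : Projective K := by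
  obtain ⟨P, _, i, r, hir⟩ := h
  exact Retract.projective ⟨i, r, hir⟩

namespace IsStableEquiv

variable [Preadditive C] [HasBinaryBiproducts C]

theorem comp {X Y Z : C} {f : X ⟶ Y} {g : Y ⟶ Z} (hf : IsStableEquiv f)
    (hg : IsStableEquiv g) : IsStableEquiv (f ≫ g) := by
  obtain ⟨f', hf₁, hf₂⟩ := hf
  obtain ⟨g', hg₁, hg₂⟩ := hg
  refine ⟨g' ≫ f', ?_, ?_⟩
  · have : (f ≫ g) ≫ g' ≫ f' - 𝟙 X = f ≫ (g ≫ g' - 𝟙 Y) ≫ f' + (f ≫ f' - 𝟙 X) := by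
      simp only [Preadditive.sub_comp, Preadditive.comp_sub, Category.id_comp, Category.assoc]
      abel
    rw [this]
    exact ((hg₁.postcomp f').precomp f).add hf₁
  · have : (g' ≫ f') ≫ f ≫ g - 𝟙 Z = g' ≫ (f' ≫ f - 𝟙 Y) ≫ g + (g' ≫ g - 𝟙 Z) := by
      simp only [Preadditive.sub_comp, Preadditive.comp_sub, Category.id_comp, Category.assoc]
      abel
    rw [this]
    exact ((hf₂.postcomp g).precomp g').add hg₂

/-- Subtracting from a stable inverse `h` a lift through `ψ` of the error term `h ≫ ψ - 𝟙`
gives a genuine section. -/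
theorem exists_section_of_epi {X Y : C} {ψ : X ⟶ Y} [Epi ψ] (hψ : IsStableEquiv ψ) :
    ∃ s : Y ⟶ X, s ≫ ψ = 𝟙 Y ∧ FactorsThroughProjective (ψ ≫ s - 𝟙 X) := by
  obtain ⟨h, hl, ⟨Q, _, u, v, huv⟩⟩ := hψ
  refine ⟨h - u ≫ Projective.factorThru v ψ, by simp [huv], ?_⟩
  have : ψ ≫ (h - u ≫ Projective.factorThru v ψ) - 𝟙 X =
      (ψ ≫ h - 𝟙 X) - ψ ≫ u ≫ Projective.factorThru v ψ := by
    simp only [Preadditive.comp_sub]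
    abel
  rw [this]
  exact hl.sub (((FactorsThroughProjective.of_projective _).precomp u).precomp ψ)

end IsStableEquiv

section Abelian

variable [Abelian C]

theorem projective_kernel_of_isStableEquiv {X Y : C} (ψ : X ⟶ Y) [Epi ψ]
    (hψ : IsStableEquiv ψ) : Projective (kernel ψ) := by
  obtain ⟨s, hs, hftp⟩ := hψ.exists_section_of_epi
  let t : X ⟶ kernel ψ := kernel.lift ψ (ψ ≫ s - 𝟙 X) (by simp [hs])
  have hιt : kernel.ι ψ ≫ t = -𝟙 (kernel ψ) := by
    ext
    simp [t]
  have : 𝟙 (kernel ψ) = kernel.ι ψ ≫ (ψ ≫ s - 𝟙 X) ≫ t := by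
    simp [t, hιt]
  apply projective_of_factorsThroughProjective_id
  rw [this]
  exact (hftp.postcomp t).precomp _

theorem isStableEquiv_of_epi {X Y : C} (ψ : X ⟶ Y) [Epi ψ] [Projective (kernel ψ)]
    [Injective (kernel ψ)] : IsStableEquiv ψ := by
  let S := ShortComplex.mk (kernel.ι ψ) ψ (by simp)
  let σ := ShortComplex.Splitting.ofExactOfRetraction S
    (S.exact_of_f_is_kernel (kernelIsKernel ψ)) (Injective.factorThru (𝟙 _) (kernel.ι ψ))
    (by simp [S]) (by assumption)
  refine ⟨σ.s, ⟨kernel ψ, inferInstance, -σ.r, kernel.ι ψ, ?_⟩, ?_⟩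
  · rw [← σ.id]
    simp [S]
  · rw [σ.s_g, sub_self]
    exact FactorsThroughProjective.zero Y Y

end Abelian

section Biproducts

variable [Preadditive C]

theorem BinaryBicone.isStableEquiv_inl [HasZeroObject C] {X P : C} [Projective P]
    {b : BinaryBicone X P} (hb : b.IsBilimit) : IsStableEquiv b.inl := by
  refine ⟨b.fst, by simpa using FactorsThroughProjective.zero X X, ?_⟩
  rw [← IsBilimit.binary_total hb, sub_add_cancel_left]
  exact ((FactorsThroughProjective.of_projective b.inr).precomp b.snd).neg

theorem isStableEquiv_biprod_desc [HasBinaryBiproducts C] {X Y P : C} [Projective P]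
    {φ : X ⟶ Y} (hφ : IsStableEquiv φ) (ρ : P ⟶ Y) : IsStableEquiv (biprod.desc φ ρ) := by
  obtain ⟨h, hl, hr⟩ := hφ
  refine ⟨h ≫ biprod.inl, ?_, by simpa using hr⟩
  have : biprod.desc φ ρ ≫ h ≫ biprod.inl - 𝟙 (X ⊞ P) =
      biprod.fst ≫ (φ ≫ h - 𝟙 X) ≫ biprod.inl +
        biprod.snd ≫ (ρ ≫ h ≫ biprod.inl - biprod.inr) := by
    ext <;> simp
  rw [this]
  exact ((hl.postcomp _).precomp _).add ((FactorsThroughProjective.of_projective _).precomp _)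

variable [HasBinaryBiproducts C] {J : Type*} [Category J]

noncomputable def pointwiseBiprodDesc {F P G : J ⥤ C} (φ : F ⟶ G) (ρ : P ⟶ G) :
    (pointwiseBinaryBicone F P).pt ⟶ G where
  app j := biprod.desc (φ.app j) (ρ.app j)
  naturality i j f := by
    -- the objects of the bicone point are biproducts only up to unfolding, which `simp` won't do
    change biprod.map (F.map f) (P.map f) ≫ biprod.desc _ _ = biprod.desc _ _ ≫ G.map f
    ext <;> simp

theorem pointwiseBinaryBicone_inl_pointwiseBiprodDesc {F P G : J ⥤ C} (φ : F ⟶ G)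
    (ρ : P ⟶ G) : (pointwiseBinaryBicone F P).inl ≫ pointwiseBiprodDesc φ ρ = φ := by
  ext j
  exact biprod.inl_desc _ _

end Biproducts

theorem mono_map_of_mono_app {J : Type*} [Category J] {K F : J ⥤ C} (α : K ⟶ F)
    [∀ j, Mono (α.app j)] {i j : J} (f : i ⟶ j) [Mono (F.map f)] : Mono (K.map f) :=
  have : Mono (K.map f ≫ α.app j) := by rw [α.naturality]; infer_instance
  mono_of_mono _ (α.app j)

theorem isSplitMono_of_injective {A B : C} (i : A ⟶ B) [Mono i] [Injective A] :
    IsSplitMono i :=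
  IsSplitMono.mk' ⟨Injective.factorThru (𝟙 A) i, by simp⟩

section Sequences

variable [Preadditive C]

theorem exists_extension_of_isSplitMono {A B E Y : C} [Projective B] (i : A ⟶ B)
    [IsSplitMono i] (e : E ⟶ Y) [Epi e] (g : B ⟶ Y) (ℓ : A ⟶ E) (hℓ : ℓ ≫ e = i ≫ g) :
    ∃ ℓ' : B ⟶ E, i ≫ ℓ' = ℓ ∧ ℓ' ≫ e = g :=
  ⟨Projective.factorThru g e + retraction i ≫ (ℓ - i ≫ Projective.factorThru g e),
    by simp, by simp [hℓ]⟩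

theorem projective_colimit_of_isSplitMono (H : ℕ ⥤ C) [HasColimit H]
    [∀ n, Projective (H.obj n)] [∀ n : ℕ, IsSplitMono (H.map (homOfLE n.le_succ))] :
    Projective (colimit H) where
  factors {E Y} f e _ := by
    choose next hnext using fun n (ℓ : {ℓ : H.obj n ⟶ E // ℓ ≫ e = colimit.ι H n ≫ f}) =>
      exists_extension_of_isSplitMono (H.map (homOfLE n.le_succ)) e
        (colimit.ι H (n + 1) ≫ f) ℓ.1 (by rw [ℓ.2, colimit.w_assoc])
    let ℓ (n : ℕ) : {ℓ : H.obj n ⟶ E // ℓ ≫ e = colimit.ι H n ≫ f} :=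
      Nat.rec ⟨Projective.factorThru (colimit.ι H 0 ≫ f) e, by simp⟩
        (fun n ℓ => ⟨next n ℓ, (hnext n ℓ).2⟩) n
    refine ⟨colimit.desc H ⟨E, NatTrans.ofSequence (fun n => (ℓ n).1) fun n => ?_⟩, ?_⟩
    · simpa using (hnext n (ℓ n)).1
    · ext n
      simpa using (ℓ n).2

variable [HasBinaryBiproducts C] [EnoughProjectives C] (G : ℕ ⥤ C)

/-- Stage `n` is `Q₀ ⊞ ⋯ ⊞ Qₙ` with `Qₖ = Projective.over (G k)`, mapped to `G n` along the
transition maps of `G`. -/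
noncomputable def cumulativeProjectiveCover : (n : ℕ) → Σ P : C, P ⟶ G.obj n
  | 0 => ⟨Projective.over (G.obj 0), Projective.π _⟩
  | n + 1 => ⟨(cumulativeProjectiveCover n).1 ⊞ Projective.over (G.obj (n + 1)),
      biprod.desc ((cumulativeProjectiveCover n).2 ≫ G.map (homOfLE n.le_succ))
        (Projective.π _)⟩

theorem exists_projective_sequence_epi :
    ∃ (P : ℕ ⥤ C) (ρ : P ⟶ G), (∀ n, Projective (P.obj n)) ∧
      (∀ n : ℕ, IsSplitMono (P.map (homOfLE n.le_succ))) ∧ ∀ n, Epi (ρ.app n) := by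
  let P : ℕ ⥤ C := Functor.ofSequence fun n =>
    (biprod.inl : (cumulativeProjectiveCover G n).1 ⟶ _ ⊞ Projective.over (G.obj (n + 1)))
  have hP (n : ℕ) : P.map (homOfLE n.le_succ) = biprod.inl :=
    Functor.ofSequence_map_homOfLE_succ _ n
  refine ⟨P, NatTrans.ofSequence (fun n => (cumulativeProjectiveCover G n).2) fun n => ?_,
    fun n => ?_, fun n => ?_, fun n => ?_⟩
  · rw [hP]
    exact biprod.inl_desc _ _
  · induction n with
    | zero => exact inferInstanceAs (Projective (Projective.over _))
    | succ n ih =>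
      have : Projective (cumulativeProjectiveCover G n).1 := ih
      exact inferInstanceAs (Projective (_ ⊞ _))
  · rw [hP]
    exact inferInstanceAs (IsSplitMono (biprod.inl : _ ⟶ _ ⊞ _))
  · cases n with
    | zero => exact inferInstanceAs (Epi (Projective.π _))
    | succ n => exact inferInstanceAs (Epi (biprod.desc _ _))

end Sequences

section Colimits

variable [Abelian C] [HasColimitsOfShape ℕ C]

theorem isStableEquiv_colimMap_of_epi [PreservesFiniteLimits (colim : (ℕ ⥤ C) ⥤ C)]
    (hPI : ∀ P : C, Projective P → Injective P) {F G : ℕ ⥤ C} (ψ : F ⟶ G)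
    (hF : ∀ n : ℕ, Mono (F.map (homOfLE n.le_succ))) [∀ n, Epi (ψ.app n)]
    (hψ : ∀ n, IsStableEquiv (ψ.app n)) : IsStableEquiv (colimMap ψ) := by
  have hK (n : ℕ) : Projective ((kernel ψ).obj n) :=
    Projective.of_iso (PreservesKernel.iso ((evaluation ℕ C).obj n) ψ).symm
      (projective_kernel_of_isStableEquiv (ψ.app n) (hψ n))
  have (n : ℕ) : IsSplitMono ((kernel ψ).map (homOfLE n.le_succ)) :=
    have := hPI _ (hK n)
    have := mono_map_of_mono_app (kernel.ι ψ) (homOfLE n.le_succ)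
    isSplitMono_of_injective _
  have : Projective (kernel (colimMap ψ)) :=
    Projective.of_iso (PreservesKernel.iso colim ψ) (projective_colimit_of_isSplitMono _)
  have := hPI _ this
  exact isStableEquiv_of_epi (colimMap ψ)

theorem isStableEquiv_colimMap_pointwiseBinaryBicone_inl (F P : ℕ ⥤ C)
    [Projective (colimit P)] : IsStableEquiv (colimMap (pointwiseBinaryBicone F P).inl) :=
  have := preservesBinaryBiproducts_of_preservesBiproducts (colim : (ℕ ⥤ C) ⥤ C)
  have : Projective (colim.obj P) := ‹Projective (colimit P)›
  BinaryBicone.isStableEquiv_inl (P := colim.obj P)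
    (isBinaryBilimitOfPreserves colim (pointwiseBinaryBicone.isBilimit F P))

end Colimits

theorem sequential_homotopy_colimits_well_defined_general
    {C : Type u} [Category.{v} C] [Abelian C] [EnoughProjectives C]
    [HasColimitsOfShape ℕ C]
    (hPI : ∀ P : C, Projective P → Injective P)
    (hAB5 : PreservesFiniteLimits (colim : (ℕ ⥤ C) ⥤ C))
    (F G : ℕ ⥤ C)
    (hF : ∀ n : ℕ, Mono (F.map (homOfLE (Nat.le_succ n))))
    (φ : F ⟶ G) (hφ : ∀ n : ℕ, IsStableEquiv (φ.app n)) :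
    IsStableEquiv (colimMap φ) := by
  obtain ⟨P, ρ, hP, hPsplit, hρ⟩ := exists_projective_sequence_epi G
  have : Projective (colimit P) := projective_colimit_of_isSplitMono P
  have (n : ℕ) : Epi ((pointwiseBiprodDesc φ ρ).app n) :=
    inferInstanceAs (Epi (biprod.desc _ _))
  have hψ : IsStableEquiv (colimMap (pointwiseBiprodDesc φ ρ)) :=
    isStableEquiv_colimMap_of_epi hPI _ (fun n => inferInstanceAs (Mono (biprod.map _ _)))
      fun n => isStableEquiv_biprod_desc (hφ n) (ρ.app n)
  rw [← pointwiseBinaryBicone_inl_pointwiseBiprodDesc φ ρ, ← colim_map, colim.map_comp]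
  exact (isStableEquiv_colimMap_pointwiseBinaryBicone_inl F P).comp hψ

/-- sequential homotopy colimits are well-defined.  Let `C`
be an abelian category with enough projectives, enough injectives, in which
every projective object is injective, with sequential (ℕ-indexed) colimits,
and in which sequential colimits of exact sequences are exact (i.e. the
sequential colimit functor is exact; since it is automatically right exact,
we require that it preserves finite limits).  If `F, G : ℕ ⥤ C` have all
transition maps monomorphisms, and `φ : F ⟶ G` is a natural transformation
whose components are stable equivalences, then the induced map
`colim F ⟶ colim G` is a stable equivalence. -/
theorem sequential_homotopy_colimits_well_defined
    {C : Type u} [Category.{v} C] [Abelian C] [EnoughProjectives C]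
    [EnoughInjectives C] [HasColimitsOfShape ℕ C]
    (hPI : ∀ P : C, Projective P → Injective P)
    (hAB5 : PreservesFiniteLimits (colim : (ℕ ⥤ C) ⥤ C))
    (F G : ℕ ⥤ C)
    (hF : ∀ n : ℕ, Mono (F.map (homOfLE (Nat.le_succ n))))
    (hG : ∀ n : ℕ, Mono (G.map (homOfLE (Nat.le_succ n))))
    (φ : F ⟶ G) (hφ : ∀ n : ℕ, IsStableEquiv (φ.app n)) :
    IsStableEquiv (colimMap φ) :=
  sequential_homotopy_colimits_well_defined_general hPI hAB5 F G hF φ hφ
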